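/- arXiv:1902.06275 — 2 statements merged into one kernel-verified Lean document; each statement's English description precedes it below -/
import Mathlib

section
/- Decoder correctness: for every codeword x ∈ C_{q,ℓ,r}(n) and every string z that is an output of x under the (ℓ,r)-0-insertion channel, f(z) = x. Moreover, for a run of zeros of length u, the reduced run length computed by f equals L(i,j) where i is the unique integer in {1,…,ℓ} with i ≡ u+1 (mod ℓ) and j = ⌊log_{rℓ+1}((r(u+1)+1)/(r i+1))⌋. -/
namespace ZeroErrorDup

/-- Output relation of the (ℓ,r)-0-insertion channel acting on strings over the
alphabet A_q = {0,1,…,q−1} (encoded as lists of naturals): after each input symbol,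
`c` copies of the block `0^ℓ` are inserted, for some `c ∈ {0,1,…,r}`. -/
inductive IsOutput (ℓ r : ℕ) : List ℕ → List ℕ → Prop
  | nil : IsOutput ℓ r [] []
  | cons (a : ℕ) (c : ℕ) (hc : c ≤ r) {x y : List ℕ} :
      IsOutput ℓ r x y → IsOutput ℓ r (a :: x) (a :: (List.replicate (c * ℓ) 0 ++ y))

/-- Two strings are confusable if some string is an output of both. -/
def Confusable (ℓ r : ℕ) (x y : List ℕ) : Prop :=
  ∃ z, IsOutput ℓ r x z ∧ IsOutput ℓ r y z

/-- A set of strings is a zero-error code if every two distinct elements are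
non-confusable. -/
def ZeroErrorCode (ℓ r : ℕ) (C : Set (List ℕ)) : Prop :=
  ∀ x ∈ C, ∀ y ∈ C, x ≠ y → ¬ Confusable ℓ r x y

/-- `L ℓ r i j = ((r i + 1)(r ℓ + 1)^j − 1)/r − 1` (the division is exact). -/
def L (ℓ r i j : ℕ) : ℕ := ((r * i + 1) * (r * ℓ + 1) ^ j - 1) / r - 1

/-- The block `σ 0^u`: the symbol `σ` followed by a run of `u` zeros. -/
def block (σ u : ℕ) : List ℕ := σ :: List.replicate u 0

/-- `B q ℓ r`: the set of blocks `σ 0^{L(i,j)}` with `σ ∈ {1,…,q−1}`, `1 ≤ i ≤ ℓ`, `j ≥ 0`. -/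
def B (q ℓ r : ℕ) : Set (List ℕ) :=
  { b | ∃ σ i j : ℕ, 1 ≤ σ ∧ σ ≤ q - 1 ∧ 1 ≤ i ∧ i ≤ ℓ ∧ b = block σ (L ℓ r i j) }

/-- `S q n`: strings over `A_q` of length between 1 and `n` whose first symbol is nonzero. -/
def S (q n : ℕ) : Set (List ℕ) :=
  { x | x ≠ [] ∧ x.length ≤ n ∧ (∀ a ∈ x, a < q) ∧ x.headI ≠ 0 }

/-- `C q ℓ r n`: strings in `S q n` that are concatenations of blocks from `B q ℓ r`. -/
def C (q ℓ r n : ℕ) : Set (List ℕ) :=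
  { x | x ∈ S q n ∧ ∃ bs : List (List ℕ), (∀ b ∈ bs, b ∈ B q ℓ r) ∧ x = bs.flatten }

/-- Reduced run length: the largest integer of the form `L ℓ r i j` (with `1 ≤ i ≤ ℓ`,
`j ≥ 0`) that is at most `u` and congruent to `u` modulo `ℓ` (such an integer always
exists). -/
noncomputable def g (ℓ r u : ℕ) : ℕ :=
  sSup { m | (∃ i j : ℕ, 1 ≤ i ∧ i ≤ ℓ ∧ m = L ℓ r i j) ∧ m ≤ u ∧ m % ℓ = u % ℓ }

/-- The map `f`, shortening each maximal run of zeros of length `u` to length `g ℓ r u`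
and leaving all nonzero symbols in place. -/
noncomputable def f (ℓ r : ℕ) (x : List ℕ) : List ℕ :=
  match h : x.dropWhile (· == 0) with
  | [] => List.replicate (g ℓ r (x.takeWhile (· == 0)).length) 0
  | a :: t =>
      List.replicate (g ℓ r (x.takeWhile (· == 0)).length) 0 ++ a :: f ℓ r t
termination_by x.length
decreasing_by
  have h1 : (x.dropWhile (· == 0)).length ≤ x.length :=
    (List.dropWhile_sublist _).length_le
  rw [h] at h1
  simp only [List.length_cons] at h1
  omega

/-! Writing `N(i, j) = (r i + 1)(r ℓ + 1)^j`, one has `r (L(i,j) + 1) + 1 = N(i, j)` and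
`L(i,j) + 1 ≡ i (mod ℓ)`. So a run length `u` determines `i` by its residue, and `L(i, j) ≤ u`
exactly when `N(i, j) ≤ r (u + 1) + 1`, i.e. when `j` is at most the stated logarithm; hence
`g u = L(i, j)` for the largest such `j`. The channel stretches the run `0^{L(i,j)}` following a
nonzero symbol to `0^{L(i,j) + k ℓ}` with `k ≤ r (L(i,j) + 1)`, which keeps the residue and stays
below `L(i, j + 1) = L(i,j) + r ℓ (L(i,j) + 1) + ℓ`; so `g` restores `L(i,j)` and `f` restores
every block. -/

section RunLengths

variable {ℓ r i : ℕ}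

lemma exists_L_add_one_eq (hr : 0 < r) (hi : 0 < i) (j : ℕ) :
    ∃ s, (r * ℓ + 1) ^ j = r * ℓ * s + 1 ∧ L ℓ r i j + 1 = i + ℓ * (s * (r * i + 1)) := by
  obtain ⟨s, hs⟩ : r * ℓ ∣ (r * ℓ + 1) ^ j - 1 := by
    simpa using Nat.sub_dvd_pow_sub_pow (r * ℓ + 1) 1 j
  have hpow : (r * ℓ + 1) ^ j = r * ℓ * s + 1 := by
    have := Nat.one_le_pow j (r * ℓ + 1) (Nat.succ_pos _)
    omega
  refine ⟨s, hpow, ?_⟩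
  have hnum : (r * i + 1) * (r * ℓ * s + 1) - 1 = r * (i + ℓ * (s * (r * i + 1))) :=
    Nat.sub_eq_of_eq_add (by ring)
  have hpos : 0 < i + ℓ * (s * (r * i + 1)) := by omega
  rw [L, hpow, hnum, Nat.mul_div_cancel_left _ hr]
  omega

lemma mul_L_add_one_add_one (hr : 0 < r) (hi : 0 < i) (j : ℕ) :
    r * (L ℓ r i j + 1) + 1 = (r * i + 1) * (r * ℓ + 1) ^ j := by
  obtain ⟨s, hpow, hL⟩ := exists_L_add_one_eq (ℓ := ℓ) hr hi j
  rw [hL, hpow]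
  ring

lemma L_add_one_mod (hr : 0 < r) (hi : 0 < i) (j : ℕ) : (L ℓ r i j + 1) % ℓ = i % ℓ := by
  obtain ⟨s, -, hL⟩ := exists_L_add_one_eq (ℓ := ℓ) hr hi j
  rw [hL, Nat.add_mul_mod_self_left]

lemma L_succ (hr : 0 < r) (hi : 0 < i) (j : ℕ) :
    L ℓ r i (j + 1) = L ℓ r i j + r * ℓ * (L ℓ r i j + 1) + ℓ := by
  have h := mul_L_add_one_add_one (ℓ := ℓ) hr hi (j + 1)
  rw [pow_succ, ← mul_assoc, ← mul_L_add_one_add_one hr hi j] at h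
  have : r * (L ℓ r i (j + 1) + 1) = r * (L ℓ r i j + 1 + r * ℓ * (L ℓ r i j + 1) + ℓ) := by
    linear_combination h
  have := Nat.eq_of_mul_eq_mul_left hr this
  omega

lemma L_mono (hr : 0 < r) (hi : 0 < i) : Monotone (L ℓ r i) :=
  monotone_nat_of_le_succ fun j => by rw [L_succ hr hi]; omega

lemma L_le_iff (hr : 0 < r) (hi : 0 < i) {j u : ℕ} :
    L ℓ r i j ≤ u ↔ (r * i + 1) * (r * ℓ + 1) ^ j ≤ r * (u + 1) + 1 := by
  rw [← mul_L_add_one_add_one hr hi, Nat.add_le_add_iff_right, Nat.mul_le_mul_left_iff hr,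
    Nat.add_le_add_iff_right]

lemma L_le_iff_le_log (hℓ : 0 < ℓ) (hr : 0 < r) (hi : 0 < i) {j u : ℕ} (hiu : i ≤ u + 1) :
    L ℓ r i j ≤ u ↔ j ≤ Nat.log (r * ℓ + 1) ((r * (u + 1) + 1) / (r * i + 1)) := by
  have hquot : (r * (u + 1) + 1) / (r * i + 1) ≠ 0 :=
    (Nat.div_pos (Nat.add_le_add_right (Nat.mul_le_mul_left r hiu) 1) (Nat.succ_pos _)).ne'
  rw [L_le_iff hr hi, mul_comm, ← Nat.le_div_iff_mul_le (Nat.succ_pos _),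
    ← Nat.le_log_iff_pow_le (by nlinarith) hquot]

end RunLengths

lemma le_of_mod_eq {ℓ i m : ℕ} (hi : 0 < i) (hiℓ : i ≤ ℓ) (hm : 0 < m) (h : i % ℓ = m % ℓ) :
    i ≤ m := by
  have hpred : (i - 1) % ℓ = (m - 1) % ℓ :=
    Nat.ModEq.add_right_cancel' 1 (by rwa [Nat.sub_add_cancel hi, Nat.sub_add_cancel hm])
  rw [Nat.mod_eq_of_lt (by omega)] at hpred
  have := Nat.mod_le (m - 1) ℓ
  omega

section Reduction

variable {ℓ r i j u : ℕ}

lemma g_zero : g ℓ r 0 = 0 :=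
  Nat.le_zero.mp (csSup_le' fun _ hm => hm.2.1)

lemma g_eq_L (hr : 0 < r) (hi : 0 < i) (hiℓ : i ≤ ℓ) (hmod : i % ℓ = (u + 1) % ℓ)
    (hle : L ℓ r i j ≤ u) (hlt : u < L ℓ r i (j + 1)) : g ℓ r u = L ℓ r i j := by
  refine IsGreatest.csSup_eq ⟨⟨⟨i, j, hi, hiℓ, rfl⟩, hle, ?_⟩, ?_⟩
  · exact Nat.ModEq.add_right_cancel' 1 (by rw [Nat.ModEq, L_add_one_mod hr hi, hmod])
  · rintro _ ⟨⟨i', j', hi', hi'ℓ, rfl⟩, hle', hmod'⟩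
    have hmod'' : i' % ℓ = i % ℓ := by
      rw [hmod, ← L_add_one_mod hr hi' j']
      exact Nat.ModEq.add_right 1 hmod'
    obtain rfl : i = i' :=
      le_antisymm (le_of_mod_eq hi hiℓ hi' hmod''.symm) (le_of_mod_eq hi' hi'ℓ hi hmod'')
    refine L_mono hr hi (not_lt.mp fun hj => ?_)
    have : L ℓ r i (j + 1) ≤ L ℓ r i j' := L_mono hr hi hj
    omega

theorem g_eq_L_log (hℓ : 0 < ℓ) (hr : 0 < r) (hi : 0 < i) (hiℓ : i ≤ ℓ)
    (hmod : i % ℓ = (u + 1) % ℓ) :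
    g ℓ r u = L ℓ r i (Nat.log (r * ℓ + 1) ((r * (u + 1) + 1) / (r * i + 1))) := by
  have hiu : i ≤ u + 1 := le_of_mod_eq hi hiℓ (Nat.succ_pos u) hmod
  refine g_eq_L hr hi hiℓ hmod ((L_le_iff_le_log hℓ hr hi hiu).2 le_rfl) (lt_of_not_ge fun h => ?_)
  have := (L_le_iff_le_log hℓ hr hi hiu).1 h
  omega

lemma g_L_add_mul (hr : 0 < r) (hi : 0 < i) (hiℓ : i ≤ ℓ) {k : ℕ}
    (hk : k ≤ r * (L ℓ r i j + 1)) : g ℓ r (L ℓ r i j + k * ℓ) = L ℓ r i j := by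
  refine g_eq_L hr hi hiℓ ?_ (Nat.le_add_right _ _) ?_
  · rw [add_right_comm, Nat.add_mul_mod_self_right, L_add_one_mod hr hi]
  · have : k * ℓ ≤ r * ℓ * (L ℓ r i j + 1) := by
      calc k * ℓ ≤ r * (L ℓ r i j + 1) * ℓ := Nat.mul_le_mul_right ℓ hk
        _ = r * ℓ * (L ℓ r i j + 1) := by ring
    rw [L_succ hr hi]
    omega

end Reduction

section Decoder

variable {ℓ r : ℕ}

lemma f_replicate (v : ℕ) : f ℓ r (List.replicate v 0) = List.replicate (g ℓ r v) 0 := by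
  rw [f]
  split
  · simp
  · next heq => simp at heq

lemma f_replicate_append_cons (v : ℕ) {a : ℕ} (ha : a ≠ 0) (t : List ℕ) :
    f ℓ r (List.replicate v 0 ++ a :: t) = List.replicate (g ℓ r v) 0 ++ a :: f ℓ r t := by
  have hdrop : (List.replicate v 0 ++ a :: t).dropWhile (· == 0) = a :: t := by
    simp [ha]
  have htake : (List.replicate v 0 ++ a :: t).takeWhile (· == 0) = List.replicate v 0 := by
    simp [ha]
  rw [f]
  split
  · next heq => simp [hdrop] at heq
  · next heq =>
    rw [hdrop, List.cons.injEq] at heq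
    rw [htake, List.length_replicate, ← heq.1, ← heq.2]

lemma f_nil : f ℓ r [] = [] := by
  simpa [g_zero] using f_replicate (ℓ := ℓ) (r := r) 0

lemma f_cons_of_ne_zero {a : ℕ} (ha : a ≠ 0) (t : List ℕ) : f ℓ r (a :: t) = a :: f ℓ r t := by
  simpa [g_zero] using f_replicate_append_cons (ℓ := ℓ) (r := r) 0 ha t

lemma f_replicate_append (v : ℕ) {rest : List ℕ} (h : ∀ a ∈ rest.head?, a ≠ 0) :
    f ℓ r (List.replicate v 0 ++ rest) = List.replicate (g ℓ r v) 0 ++ f ℓ r rest := by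
  cases rest with
  | nil => simp [f_replicate, f_nil]
  | cons a t => rw [f_replicate_append_cons v (h a rfl), f_cons_of_ne_zero (h a rfl)]

end Decoder

namespace IsOutput

variable {ℓ r : ℕ}

lemma head?_eq {x z : List ℕ} (h : IsOutput ℓ r x z) : z.head? = x.head? := by
  cases h <;> rfl

lemma exists_split_of_append {x₁ x₂ z : List ℕ} (h : IsOutput ℓ r (x₁ ++ x₂) z) :
    ∃ z₁ z₂, z = z₁ ++ z₂ ∧ IsOutput ℓ r x₁ z₁ ∧ IsOutput ℓ r x₂ z₂ := by
  induction x₁ generalizing z with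
  | nil => exact ⟨[], z, rfl, nil, h⟩
  | cons a t ih =>
    obtain _ | ⟨_, c, hc, h'⟩ := h
    obtain ⟨z₁, z₂, rfl, h₁, h₂⟩ := ih h'
    exact ⟨a :: (List.replicate (c * ℓ) 0 ++ z₁), z₂, by simp, cons a c hc h₁, h₂⟩

lemma exists_eq_replicate_zero {m : ℕ} {z : List ℕ} (h : IsOutput ℓ r (List.replicate m 0) z) :
    ∃ k ≤ r * m, z = List.replicate (m + k * ℓ) 0 := by
  induction m generalizing z with
  | zero => cases h; exact ⟨0, Nat.zero_le _, by simp⟩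
  | succ m ih =>
    obtain _ | ⟨_, c, hc, h'⟩ := h
    obtain ⟨k, hk, rfl⟩ := ih h'
    refine ⟨c + k, by rw [Nat.mul_succ]; omega, ?_⟩
    rw [show m + 1 + (c + k) * ℓ = c * ℓ + (m + k * ℓ) + 1 by ring, List.replicate_succ]
    simp only [List.replicate_add]

lemma exists_eq_block {σ v : ℕ} {z : List ℕ} (h : IsOutput ℓ r (block σ v) z) :
    ∃ k ≤ r * (v + 1), z = block σ (v + k * ℓ) := by
  obtain _ | ⟨_, c, hc, h'⟩ := h
  obtain ⟨k, hk, rfl⟩ := exists_eq_replicate_zero h'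
  refine ⟨c + k, by rw [Nat.mul_succ]; omega, ?_⟩
  rw [block, show v + (c + k) * ℓ = c * ℓ + (v + k * ℓ) by ring]
  simp only [List.replicate_add]

end IsOutput

lemma head?_flatten_ne_zero {q ℓ r : ℕ} {bs : List (List ℕ)} (hbs : ∀ b ∈ bs, b ∈ B q ℓ r) :
    ∀ a ∈ bs.flatten.head?, a ≠ 0 := by
  cases bs with
  | nil => simp
  | cons b bs =>
    obtain ⟨σ, i, j, hσ, -, -, -, rfl⟩ := hbs b List.mem_cons_self
    simp only [List.flatten_cons, block, List.cons_append, List.head?_cons, Option.mem_some_iff]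
    omega

theorem f_eq_of_isOutput_flatten {q ℓ r : ℕ} (hr : 0 < r) {bs : List (List ℕ)}
    (hbs : ∀ b ∈ bs, b ∈ B q ℓ r) {z : List ℕ} (hz : IsOutput ℓ r bs.flatten z) :
    f ℓ r z = bs.flatten := by
  induction bs generalizing z with
  | nil => cases hz; exact f_nil
  | cons b bs ih =>
    have hbs' : ∀ b ∈ bs, b ∈ B q ℓ r := fun b hb => hbs b (List.mem_cons_of_mem _ hb)
    obtain ⟨σ, i, j, hσ, -, hi, hiℓ, rfl⟩ := hbs b List.mem_cons_self
    obtain ⟨z₁, z₂, rfl, h₁, h₂⟩ := hz.exists_split_of_append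
    obtain ⟨k, hk, rfl⟩ := h₁.exists_eq_block
    have hz₂ : ∀ a ∈ z₂.head?, a ≠ 0 := h₂.head?_eq ▸ head?_flatten_ne_zero hbs'
    simp only [List.flatten_cons, block, List.cons_append]
    rw [f_cons_of_ne_zero (by omega), f_replicate_append _ hz₂, g_L_add_mul hr hi hiℓ hk,
      ih hbs' h₂]

theorem stmt10_general (q ℓ r n : ℕ) (hℓ : 1 ≤ ℓ) (hr : 1 ≤ r) :
    (∀ x ∈ C q ℓ r n, ∀ z, IsOutput ℓ r x z → f ℓ r z = x) ∧
      (∀ u i : ℕ, 1 ≤ i → i ≤ ℓ → i % ℓ = (u + 1) % ℓ →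
        g ℓ r u = L ℓ r i (Nat.log (r * ℓ + 1) ((r * (u + 1) + 1) / (r * i + 1)))) := by
  refine ⟨?_, fun u i hi hiℓ hmod => g_eq_L_log hℓ hr hi hiℓ hmod⟩
  rintro x ⟨-, bs, hbs, rfl⟩ z hz
  exact f_eq_of_isOutput_flatten hr hbs hz

/-- decoder correctness: for every codeword `x ∈ C q ℓ r n` and every
output `z` of `x` under the (ℓ,r)-0-insertion channel, `f z = x`.  Moreover, for a
run of zeros of length `u` the reduced run length computed by `f` equals `L ℓ r i j`,
where `i ∈ {1,…,ℓ}` is the unique integer with `i ≡ u+1 (mod ℓ)` and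
`j = ⌊log_{rℓ+1}((r(u+1)+1)/(r i+1))⌋`. -/
theorem stmt10 (q ℓ r n : ℕ) (hq : 2 ≤ q) (hℓ : 1 ≤ ℓ) (hr : 1 ≤ r) (hn : 1 ≤ n) :
    (∀ x ∈ C q ℓ r n, ∀ z, IsOutput ℓ r x z → f ℓ r z = x) ∧
      (∀ u i : ℕ, 1 ≤ i → i ≤ ℓ → i % ℓ = (u + 1) % ℓ →
        g ℓ r u = L ℓ r i (Nat.log (r * ℓ + 1) ((r * (u + 1) + 1) / (r * i + 1)))) :=
  stmt10_general q ℓ r n hℓ hr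

end ZeroErrorDup
end

section
/- For fixed ℓ ≥ 1 and r ≥ 1, the zero-error capacity C₀(q) = −log₂ ρ(q,ℓ,r) is strictly increasing in q (for q ≥ 2), and lim_{q→∞} (C₀(q) − log₂ q) = 0. -/
namespace ZeroErrorDup

/-- The generating function `v_{q,ℓ,r}(x) = (q−1) Σ_{j=0}^∞ Σ_{i=1}^ℓ x^{L(i,j)+1}`. -/
noncomputable def v (q ℓ r : ℕ) (x : ℝ) : ℝ :=
  ((q : ℝ) - 1) * ∑' j : ℕ, ∑ i ∈ Finset.Icc 1 ℓ, x ^ (L ℓ r i j + 1)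

/-!
Factor `v q ℓ r x = (q - 1) x g(x)` with `g(x) = Σ_j Σ_i x^{L(i,j)}`. Since `L(i,j) ≥ j` and
`L(i,j) = 0` only at `(i,j) = (1,0)`, `g` is a monotone power series on `[0,1)` with `g ≥ 1`
and `g(x) → 1` as `x → 0` (dominated convergence against `ℓ 2^{-j}`). The root `ρ_q` of
`(q - 1) ρ g(ρ) = 1` is therefore strictly decreasing in `q`, and `ρ_q ≤ 1/(q - 1) → 0`, so
`q ρ_q = q / ((q - 1) g(ρ_q)) → 1`; finally `C₀(q) - log₂ q = -log₂ (q ρ_q)`.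
-/

open Filter Topology Set

section Exponents

variable {ℓ r : ℕ}

lemma L_zero (hr : 0 < r) (i : ℕ) : L ℓ r i 0 = i - 1 := by
  simp [L, Nat.mul_div_cancel_left _ hr]

lemma le_L (hℓ : 1 ≤ ℓ) (hr : 1 ≤ r) {i : ℕ} (hi : 1 ≤ i) (j : ℕ) : j ≤ L ℓ r i j := by
  have bernoulli : 1 + j * (r * ℓ) ≤ (1 + r * ℓ) ^ j := by
    simpa using one_add_le_pow_of_two_add_nonneg (Nat.zero_le (2 + r * ℓ)) j
  have hrℓ : r ≤ r * ℓ := Nat.le_mul_of_pos_right r hℓ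
  have hri : r ≤ r * i := Nat.le_mul_of_pos_right r hi
  have key : (j + 1) * r ≤ (r * i + 1) * (r * ℓ + 1) ^ j - 1 := by
    have hprod : (r + 1) * (1 + j * r) ≤ (r * i + 1) * (1 + r * ℓ) ^ j :=
      Nat.mul_le_mul (Nat.add_le_add_right hri 1)
        (bernoulli.trans' (Nat.add_le_add_left (Nat.mul_le_mul_left j hrℓ) 1))
    have hexpand : (j + 1) * r + 1 ≤ (r + 1) * (1 + j * r) := by
      nlinarith [Nat.zero_le (j * r * r)]
    rw [add_comm (r * ℓ)]
    omega
  have hdiv := (Nat.le_div_iff_mul_le (by omega)).2 key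
  unfold L
  omega

lemma L_eq_zero_iff (hℓ : 1 ≤ ℓ) (hr : 1 ≤ r) {i : ℕ} (hi : 1 ≤ i) (j : ℕ) :
    L ℓ r i j = 0 ↔ i = 1 ∧ j = 0 := by
  constructor
  · intro h
    have hj : j = 0 := by have := le_L hℓ hr hi j; omega
    subst hj
    rw [L_zero hr] at h
    omega
  · rintro ⟨rfl, rfl⟩
    simp [L_zero hr]

end Exponents

noncomputable def dupSeries (ℓ r : ℕ) (x : ℝ) : ℝ :=
  ∑' j : ℕ, ∑ i ∈ Finset.Icc 1 ℓ, x ^ L ℓ r i j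

section DupSeries

variable {ℓ r : ℕ}

lemma v_eq (q : ℕ) (x : ℝ) : v q ℓ r x = (q - 1) * (x * dupSeries ℓ r x) := by
  simp only [v, dupSeries, ← tsum_mul_left, Finset.mul_sum, pow_succ']

lemma norm_sum_pow_L_le (hℓ : 1 ≤ ℓ) (hr : 1 ≤ r) {x : ℝ} (hx : ‖x‖ ≤ 1) (j : ℕ) :
    ‖∑ i ∈ Finset.Icc 1 ℓ, x ^ L ℓ r i j‖ ≤ ℓ * ‖x‖ ^ j := by
  calc ‖∑ i ∈ Finset.Icc 1 ℓ, x ^ L ℓ r i j‖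
      ≤ ∑ i ∈ Finset.Icc 1 ℓ, ‖x‖ ^ j := by
        refine (norm_sum_le _ _).trans (Finset.sum_le_sum fun i hi => ?_)
        rw [norm_pow]
        exact pow_le_pow_of_le_one (norm_nonneg x) hx (le_L hℓ hr (Finset.mem_Icc.1 hi).1 j)
    _ = ℓ * ‖x‖ ^ j := by simp

lemma summable_dupSeries (hℓ : 1 ≤ ℓ) (hr : 1 ≤ r) {x : ℝ} (hx : ‖x‖ < 1) :
    Summable fun j => ∑ i ∈ Finset.Icc 1 ℓ, x ^ L ℓ r i j :=
  Summable.of_norm_bounded ((summable_geometric_of_lt_one (norm_nonneg x) hx).mul_left (ℓ : ℝ))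
    (norm_sum_pow_L_le hℓ hr hx.le)

lemma dupSeries_zero (hℓ : 1 ≤ ℓ) (hr : 1 ≤ r) : dupSeries ℓ r 0 = 1 := by
  have hterm (j : ℕ) : ∑ i ∈ Finset.Icc 1 ℓ, (0 : ℝ) ^ L ℓ r i j = if j = 0 then 1 else 0 := by
    rw [Finset.sum_eq_single_of_mem 1 (Finset.mem_Icc.2 ⟨le_rfl, hℓ⟩)]
    · simp [zero_pow_eq, L_eq_zero_iff hℓ hr le_rfl]
    · intro i hi hi1
      simp [L_eq_zero_iff hℓ hr (Finset.mem_Icc.1 hi).1, hi1]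
  simp [dupSeries, hterm]

lemma tendsto_dupSeries (hℓ : 1 ≤ ℓ) (hr : 1 ≤ r) :
    Tendsto (dupSeries ℓ r) (𝓝 0) (𝓝 1) := by
  rw [← dupSeries_zero hℓ hr]
  refine tendsto_tsum_of_dominated_convergence
    ((summable_geometric_two).mul_left (ℓ : ℝ)) (fun j => ?_) ?_
  · exact tendsto_finsetSum _ fun i _ => (continuous_pow _).tendsto' 0 _ rfl
  · filter_upwards [Metric.closedBall_mem_nhds (0 : ℝ) one_half_pos] with x hx j
    rw [mem_closedBall_zero_iff] at hx
    exact (norm_sum_pow_L_le hℓ hr (hx.trans one_half_lt_one.le) j).trans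
      (by gcongr)

lemma one_le_dupSeries (hℓ : 1 ≤ ℓ) (hr : 1 ≤ r) {x : ℝ} (hx : x ∈ Ico 0 1) :
    1 ≤ dupSeries ℓ r x := by
  have hnonneg (j : ℕ) : 0 ≤ ∑ i ∈ Finset.Icc 1 ℓ, x ^ L ℓ r i j :=
    Finset.sum_nonneg fun i _ => pow_nonneg hx.1 _
  calc (1 : ℝ) = x ^ L ℓ r 1 0 := by simp [L_zero hr]
    _ ≤ ∑ i ∈ Finset.Icc 1 ℓ, x ^ L ℓ r i 0 :=
        Finset.single_le_sum (f := fun i => x ^ L ℓ r i 0) (fun i _ => pow_nonneg hx.1 _)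
          (Finset.mem_Icc.2 ⟨le_rfl, hℓ⟩)
    _ ≤ dupSeries ℓ r x :=
        (summable_dupSeries hℓ hr (by rw [Real.norm_of_nonneg hx.1]; exact hx.2)).le_tsum 0
          fun j _ => hnonneg j

lemma monotoneOn_dupSeries (hℓ : 1 ≤ ℓ) (hr : 1 ≤ r) :
    MonotoneOn (dupSeries ℓ r) (Ico 0 1) := by
  intro x hx y hy hxy
  have hsumm {z : ℝ} (hz : z ∈ Ico 0 1) := summable_dupSeries (ℓ := ℓ) (r := r) hℓ hr
    (by rw [Real.norm_of_nonneg hz.1]; exact hz.2)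
  exact (hsumm hx).tsum_le_tsum
    (fun j => Finset.sum_le_sum fun i _ => pow_le_pow_left₀ hx.1 hxy _) (hsumm hy)

end DupSeries

section RootAsymptotics

variable {g : ℝ → ℝ} {ρ : ℕ → ℝ}

lemma strictAntiOn_root (hmono : MonotoneOn g (Ico 0 1)) (hg : ∀ x ∈ Ico 0 1, 1 ≤ g x)
    (hρ : ∀ q : ℕ, 2 ≤ q → ρ q ∈ Ioo 0 1 ∧ (q - 1) * (ρ q * g (ρ q)) = 1) :
    StrictAntiOn ρ (Ici 2) := by
  intro q hq q' hq' hlt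
  obtain ⟨hρq, hq_eq⟩ := hρ q hq
  obtain ⟨hρq', hq'_eq⟩ := hρ q' hq'
  have hmem {x : ℝ} (hx : x ∈ Ioo 0 1) : x ∈ Ico 0 1 := ⟨hx.1.le, hx.2⟩
  have hcast : (q : ℝ) < q' := Nat.cast_lt.2 hlt
  have hq2 : (2 : ℝ) ≤ q := by exact_mod_cast hq
  by_contra! hle
  have hF : ρ q * g (ρ q) ≤ ρ q' * g (ρ q') :=
    mul_le_mul hle (hmono (hmem hρq) (hmem hρq') hle) (by linarith [hg _ (hmem hρq)])
      hρq'.1.le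
  have hFpos : 0 < ρ q * g (ρ q) := mul_pos hρq.1 (by linarith [hg _ (hmem hρq)])
  nlinarith

lemma tendsto_natCast_mul_root (hlim : Tendsto g (𝓝 0) (𝓝 1)) (hg : ∀ x ∈ Ico 0 1, 1 ≤ g x)
    (hρ : ∀ q : ℕ, 2 ≤ q → ρ q ∈ Ioo 0 1 ∧ (q - 1) * (ρ q * g (ρ q)) = 1) :
    Tendsto (fun q : ℕ => q * ρ q) atTop (𝓝 1) := by
  have hroot (q : ℕ) (hq : 2 ≤ q) : q * ρ q = q / (q + -1) / g (ρ q) := by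
    obtain ⟨hρq, hq_eq⟩ := hρ q hq
    have hq2 : (2 : ℝ) ≤ q := by exact_mod_cast hq
    have hg0 : g (ρ q) ≠ 0 := by linarith [hg _ ⟨hρq.1.le, hρq.2⟩]
    rw [eq_div_iff hg0, eq_div_iff (by linarith)]
    linear_combination (q : ℝ) * hq_eq
  have hρ_le (q : ℕ) (hq : 2 ≤ q) : ρ q ≤ 2 / q := by
    obtain ⟨hρq, hq_eq⟩ := hρ q hq
    have hq2 : (2 : ℝ) ≤ q := by exact_mod_cast hq
    have hg1 := hg _ ⟨hρq.1.le, hρq.2⟩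
    rw [le_div_iff₀ (by linarith)]
    nlinarith [mul_nonneg (mul_nonneg (by linarith : (0 : ℝ) ≤ q - 1) hρq.1.le)
      (sub_nonneg.2 hg1)]
  have hρ_zero : Tendsto ρ atTop (𝓝 0) :=
    tendsto_of_tendsto_of_tendsto_of_le_of_le' tendsto_const_nhds
      (tendsto_const_div_atTop_nhds_zero_nat 2)
      (eventually_atTop.2 ⟨2, fun q hq => (hρ q hq).1.1.le⟩)
      (eventually_atTop.2 ⟨2, hρ_le⟩)
  have hquot := (tendsto_natCast_div_add_atTop (-1 : ℝ)).div (hlim.comp hρ_zero) one_ne_zero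
  rw [div_one] at hquot
  exact hquot.congr' (eventually_atTop.2 ⟨2, fun q hq => (hroot q hq).symm⟩)

end RootAsymptotics

/-- for fixed `ℓ ≥ 1` and `r ≥ 1`, the zero-error capacity
`C₀(q) = −log₂ ρ(q,ℓ,r)` is strictly increasing in `q ≥ 2`, and
`lim_{q→∞} (C₀(q) − log₂ q) = 0`. -/
theorem stmt14 (ℓ r : ℕ) (hℓ : 1 ≤ ℓ) (hr : 1 ≤ r)
    (ρ : ℕ → ℝ) (hρ : ∀ q : ℕ, 2 ≤ q → ρ q ∈ Set.Ioo (0 : ℝ) 1 ∧ v q ℓ r (ρ q) = 1) :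
    StrictMonoOn (fun q : ℕ => - Real.logb 2 (ρ q)) (Set.Ici 2) ∧
    Filter.Tendsto (fun q : ℕ => (- Real.logb 2 (ρ q)) - Real.logb 2 (q : ℝ))
      Filter.atTop (nhds 0) := by
  have hroot (q : ℕ) (hq : 2 ≤ q) :
      ρ q ∈ Ioo 0 1 ∧ (q - 1) * (ρ q * dupSeries ℓ r (ρ q)) = 1 := by
    simpa only [v_eq] using hρ q hq
  have hg : ∀ x ∈ Ico 0 1, 1 ≤ dupSeries ℓ r x := fun _ => one_le_dupSeries hℓ hr
  constructor
  · intro q hq q' hq' hlt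
    have hanti := strictAntiOn_root (monotoneOn_dupSeries hℓ hr) hg hroot hq hq' hlt
    exact neg_lt_neg (Real.logb_lt_logb one_lt_two (hroot q' hq').1.1 hanti)
  · have hlog := ((tendsto_natCast_mul_root (tendsto_dupSeries hℓ hr) hg hroot).logb
      (b := 2) one_ne_zero).neg
    rw [Real.logb_one, neg_zero] at hlog
    refine hlog.congr' (eventually_atTop.2 ⟨2, fun q hq => ?_⟩)
    rw [Real.logb_mul (by positivity) (hroot q hq).1.1.ne']
    ring

end ZeroErrorDup
end
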